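/- Let p ≥ 2 be a real number. There exists a constant C > 1 (depending only on p) such that for all ξ ∈ Matrix (Fin 3) (Fin 3) ℝ, C^{-1}‖ξ‖^p − C ≤ G_p(ξ) ≤ C‖ξ‖^p + C, where G_p(ξ) := max(μ₁^{p/2} + μ₂^{p/2} + μ₃^{p/2} − 3, 0) and μ₁, μ₂, μ₃ are the (real) eigenvalues of the symmetric positive semidefinite matrix C̃(ξ) := (I₃ + ξ)ᵀ(I₃ + ξ). -/

import Mathlib

/-!
The eigenvalues μᵢ of `C̃(ξ)` are nonnegative with `∑ μᵢ = tr C̃(ξ) = ‖1 + ξ‖²`, so for `q = p/2 ≥ 1`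
the power-sum bounds `∑ μᵢ^q ≤ (∑ μᵢ)^q ≤ 3^(q-1) ∑ μᵢ^q` make `G_p(ξ) + 3` comparable to
`‖1 + ξ‖^p`. Since `‖1‖ = √3`, the triangle inequality together with
`(x + y)^p ≤ 2^(p-1) (x^p + y^p)` compares `‖1 + ξ‖^p` with `‖ξ‖^p` up to additive constants.
-/

open Matrix

/-- The Frobenius norm of a real matrix: `‖ξ‖ = (tr(ξᵀξ))^(1/2)`. -/
noncomputable def frobNorm {M N : ℕ} (ξ : Matrix (Fin M) (Fin N) ℝ) : ℝ :=
  Real.sqrt ((ξᵀ * ξ).trace)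

/-- The right Cauchy–Green tensor `C̃(ξ) = (I₃ + ξ)ᵀ(I₃ + ξ)`. -/
noncomputable def Ctil (ξ : Matrix (Fin 3) (Fin 3) ℝ) : Matrix (Fin 3) (Fin 3) ℝ :=
  (1 + ξ)ᵀ * (1 + ξ)

/-- `C̃(ξ)` is a symmetric (hermitian) real matrix. -/
lemma Ctil_isHermitian (ξ : Matrix (Fin 3) (Fin 3) ℝ) : (Ctil ξ).IsHermitian := by
  have h := Matrix.isHermitian_conjTranspose_mul_self (1 + ξ)
  rwa [Matrix.conjTranspose_eq_transpose_of_trivial] at h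

/-- The Ogden-type density `G_p(ξ) = max(μ₁^{p/2} + μ₂^{p/2} + μ₃^{p/2} − 3, 0)`,
where the `μᵢ` are the eigenvalues of `C̃(ξ)`. -/
noncomputable def Gp (p : ℝ) (ξ : Matrix (Fin 3) (Fin 3) ℝ) : ℝ :=
  max ((∑ i, (Ctil_isHermitian ξ).eigenvalues i ^ (p / 2)) - 3) 0

namespace Real

lemma rpow_add_le_mul_rpow_add_rpow {a b p : ℝ} (ha : 0 ≤ a) (hb : 0 ≤ b) (hp : 1 ≤ p) :
    (a + b) ^ p ≤ 2 ^ (p - 1) * (a ^ p + b ^ p) := by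
  lift a to NNReal using ha
  lift b to NNReal using hb
  exact_mod_cast NNReal.rpow_add_le_mul_rpow_add_rpow a b hp

lemma sum_rpow_le_rpow_sum {ι : Type*} (s : Finset ι) {f : ι → ℝ} (hf : ∀ i ∈ s, 0 ≤ f i)
    {p : ℝ} (hp : 1 ≤ p) : ∑ i ∈ s, f i ^ p ≤ (∑ i ∈ s, f i) ^ p := by
  induction s using Finset.cons_induction with
  | empty => simp [Real.zero_rpow (by linarith : p ≠ 0)]
  | cons a s ha ih =>
    have hs : ∀ i ∈ s, 0 ≤ f i := fun i hi => hf i (Finset.mem_cons_of_mem hi)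
    rw [Finset.sum_cons, Finset.sum_cons]
    calc f a ^ p + ∑ i ∈ s, f i ^ p ≤ f a ^ p + (∑ i ∈ s, f i) ^ p := by gcongr; exact ih hs
      _ ≤ (f a + ∑ i ∈ s, f i) ^ p :=
        add_rpow_le_rpow_add (hf a (Finset.mem_cons_self a s)) (Finset.sum_nonneg hs) hp

end Real

namespace Matrix.PosSemidef

variable {n : Type*} [Fintype n] [DecidableEq n] {A : Matrix n n ℝ} {q : ℝ}

lemma trace_eq_sum_eigenvalues (hA : A.PosSemidef) : A.trace = ∑ i, hA.isHermitian.eigenvalues i := by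
  simpa using hA.isHermitian.trace_eq_sum_eigenvalues

lemma sum_eigenvalues_rpow_le_trace_rpow (hA : A.PosSemidef) (hq : 1 ≤ q) :
    ∑ i, hA.isHermitian.eigenvalues i ^ q ≤ A.trace ^ q := by
  rw [hA.trace_eq_sum_eigenvalues]
  exact Real.sum_rpow_le_rpow_sum _ (fun i _ => hA.eigenvalues_nonneg i) hq

lemma trace_rpow_le_card_mul_sum_eigenvalues_rpow (hA : A.PosSemidef) (hq : 1 ≤ q) :
    A.trace ^ q ≤ (Fintype.card n : ℝ) ^ (q - 1) * ∑ i, hA.isHermitian.eigenvalues i ^ q := by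
  rw [hA.trace_eq_sum_eigenvalues]
  exact Real.rpow_sum_le_const_mul_sum_rpow_of_nonneg _ hq fun i _ => hA.eigenvalues_nonneg i

end Matrix.PosSemidef

section frobNorm

attribute [local instance] Matrix.frobeniusNormedAddCommGroup

variable {M N : ℕ}

lemma frobNorm_eq_norm (ξ : Matrix (Fin M) (Fin N) ℝ) : frobNorm ξ = ‖ξ‖ := by
  rw [Matrix.frobenius_norm_def, frobNorm, Real.sqrt_eq_rpow, Finset.sum_comm]
  simp only [Matrix.trace, Matrix.diag_apply, Matrix.mul_apply, Matrix.transpose_apply,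
    Real.rpow_two, Real.norm_eq_abs, sq_abs, ← sq]

lemma frobNorm_nonneg (ξ : Matrix (Fin M) (Fin N) ℝ) : 0 ≤ frobNorm ξ :=
  Real.sqrt_nonneg _

lemma frobNorm_neg (ξ : Matrix (Fin M) (Fin N) ℝ) : frobNorm (-ξ) = frobNorm ξ := by
  simp only [frobNorm_eq_norm, norm_neg]

lemma frobNorm_one_rpow (p : ℝ) :
    frobNorm (1 : Matrix (Fin N) (Fin N) ℝ) ^ p = (N : ℝ) ^ (p / 2) := by
  have h := congrArg NNReal.toReal (Matrix.frobenius_nnnorm_one (n := Fin N) (α := ℝ))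
  rw [coe_nnnorm, NNReal.coe_mul, Real.coe_sqrt, coe_nnnorm, norm_one (α := ℝ), mul_one,
    Fintype.card_fin, NNReal.coe_natCast] at h
  rw [frobNorm_eq_norm, h, Real.sqrt_eq_rpow, ← Real.rpow_mul (Nat.cast_nonneg N)]
  ring_nf

lemma frobNorm_add_rpow_le (ξ η : Matrix (Fin M) (Fin N) ℝ) {p : ℝ} (hp : 1 ≤ p) :
    frobNorm (ξ + η) ^ p ≤ 2 ^ (p - 1) * (frobNorm ξ ^ p + frobNorm η ^ p) := by
  simp only [frobNorm_eq_norm]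
  calc ‖ξ + η‖ ^ p ≤ (‖ξ‖ + ‖η‖) ^ p :=
        Real.rpow_le_rpow (norm_nonneg _) (norm_add_le ξ η) (by linarith)
    _ ≤ _ := Real.rpow_add_le_mul_rpow_add_rpow (norm_nonneg _) (norm_nonneg _) hp

lemma frobNorm_one_add_rpow_le (ξ : Matrix (Fin N) (Fin N) ℝ) {p : ℝ} (hp : 1 ≤ p) :
    frobNorm (1 + ξ) ^ p ≤ 2 ^ (p - 1) * ((N : ℝ) ^ (p / 2) + frobNorm ξ ^ p) := by
  simpa only [frobNorm_one_rpow] using frobNorm_add_rpow_le 1 ξ hp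

lemma frobNorm_rpow_le_one_add (ξ : Matrix (Fin N) (Fin N) ℝ) {p : ℝ} (hp : 1 ≤ p) :
    frobNorm ξ ^ p ≤ 2 ^ (p - 1) * (frobNorm (1 + ξ) ^ p + (N : ℝ) ^ (p / 2)) := by
  have h := frobNorm_add_rpow_le (1 + ξ) (-1) hp
  rwa [add_neg_cancel_comm, frobNorm_neg, frobNorm_one_rpow] at h

end frobNorm

lemma Ctil_posSemidef (ξ : Matrix (Fin 3) (Fin 3) ℝ) : (Ctil ξ).PosSemidef := by
  have h := Matrix.posSemidef_conjTranspose_mul_self (1 + ξ)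
  rwa [Matrix.conjTranspose_eq_transpose_of_trivial] at h

lemma trace_Ctil (ξ : Matrix (Fin 3) (Fin 3) ℝ) : (Ctil ξ).trace = frobNorm (1 + ξ) ^ 2 :=
  (Real.sq_sqrt (Ctil_posSemidef ξ).trace_nonneg).symm

lemma trace_Ctil_rpow (ξ : Matrix (Fin 3) (Fin 3) ℝ) (p : ℝ) :
    (Ctil ξ).trace ^ (p / 2) = frobNorm (1 + ξ) ^ p := by
  rw [trace_Ctil, ← Real.rpow_natCast, ← Real.rpow_mul (frobNorm_nonneg _)]
  ring_nf

lemma Gp_le_frobNorm_one_add_rpow {p : ℝ} (hp : 2 ≤ p) (ξ : Matrix (Fin 3) (Fin 3) ℝ) :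
    Gp p ξ ≤ frobNorm (1 + ξ) ^ p := by
  have hS := (Ctil_posSemidef ξ).sum_eigenvalues_rpow_le_trace_rpow (q := p / 2) (by linarith)
  rw [trace_Ctil_rpow] at hS
  exact max_le (by linarith) (Real.rpow_nonneg (frobNorm_nonneg _) p)

lemma frobNorm_one_add_rpow_le_Gp {p : ℝ} (hp : 2 ≤ p) (ξ : Matrix (Fin 3) (Fin 3) ℝ) :
    frobNorm (1 + ξ) ^ p ≤ 3 ^ (p / 2 - 1) * (Gp p ξ + 3) := by
  have hS := (Ctil_posSemidef ξ).trace_rpow_le_card_mul_sum_eigenvalues_rpow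
    (q := p / 2) (by linarith)
  rw [trace_Ctil_rpow, Fintype.card_fin, Nat.cast_ofNat] at hS
  have hG : ∑ i, (Ctil_isHermitian ξ).eigenvalues i ^ (p / 2) - 3 ≤ Gp p ξ := le_max_left _ _
  exact hS.trans (mul_le_mul_of_nonneg_left (by linarith) (by positivity))

/-- The two-sided estimate (2.30) of Example 3 for the Ogden-type
hyper-elastic energy density. -/
theorem ogden_two_sided_bound (p : ℝ) (hp : 2 ≤ p) :
    ∃ C : ℝ, 1 < C ∧ ∀ ξ : Matrix (Fin 3) (Fin 3) ℝ,
      C⁻¹ * frobNorm ξ ^ p - C ≤ Gp p ξ ∧ Gp p ξ ≤ C * frobNorm ξ ^ p + C := by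
  set a : ℝ := 2 ^ (p - 1)
  set b : ℝ := 3 ^ (p / 2)
  have ha : 1 ≤ a := Real.one_le_rpow (by norm_num) (by linarith)
  have hb : 1 ≤ b := Real.one_le_rpow (by norm_num) (by linarith)
  have hcb : (3 : ℝ) ^ (p / 2 - 1) = b / 3 := by
    rw [Real.rpow_sub (by norm_num), Real.rpow_one]
  refine ⟨4 * (a * b), by nlinarith, fun ξ => ?_⟩
  have hp1 : 1 ≤ p := by linarith
  have hG0 : 0 ≤ Gp p ξ := le_max_right _ _
  have hN0 : 0 ≤ frobNorm ξ ^ p := Real.rpow_nonneg (frobNorm_nonneg ξ) p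
  have hT : frobNorm (1 + ξ) ^ p ≤ a * (b + frobNorm ξ ^ p) := by
    simpa only [Nat.cast_ofNat] using frobNorm_one_add_rpow_le ξ hp1
  have hN : frobNorm ξ ^ p ≤ a * (frobNorm (1 + ξ) ^ p + b) := by
    simpa only [Nat.cast_ofNat] using frobNorm_rpow_le_one_add ξ hp1
  have hGT := Gp_le_frobNorm_one_add_rpow hp ξ
  have hTG := frobNorm_one_add_rpow_le_Gp hp ξ
  rw [hcb] at hTG
  have hK : 1 ≤ a * b := one_le_mul_of_one_le_of_one_le ha hb
  constructor
  · rw [sub_le_iff_le_add, inv_mul_le_iff₀ (by positivity)]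
    have haT := mul_le_mul_of_nonneg_left hTG (by positivity : (0 : ℝ) ≤ a)
    calc frobNorm ξ ^ p ≤ a * b / 3 * Gp p ξ + 2 * (a * b) := by linarith
      _ ≤ 4 * (a * b) * (Gp p ξ + 4 * (a * b)) := by nlinarith
  · have haN : a * frobNorm ξ ^ p ≤ 4 * (a * b) * frobNorm ξ ^ p :=
      mul_le_mul_of_nonneg_right (by nlinarith) hN0
    linarith
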